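/- arXiv:2405.07181 — 4 statements merged into one kernel-verified Lean document; each statement's English description precedes it below -/
import Mathlib

section
/- Let R be a finite commutative local ring with n elements in which 2 is a unit, and let U(R) denote its set of units. Then the Sombor index of the unit graph of R satisfies SO(G(R)) = |U(R)|·(n − |U(R)|)·√(|U(R)|² + (|U(R)| − 1)²) + |U(R)|·(|U(R)| − 1 − (n − |U(R)|))·(|U(R)| − 1)/√2. -/
open scoped Classical

/-- The total graph of a commutative ring `R`: distinct `x`, `y` are adjacent
iff `x + y` is not a unit of `R`. -/
def totalGraph (R : Type*) [CommRing R] : SimpleGraph R where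
  Adj x y := x ≠ y ∧ ¬ IsUnit (x + y)
  symm := ⟨fun x y ⟨h1, h2⟩ => ⟨h1.symm, by rwa [add_comm]⟩⟩
  loopless := ⟨fun x h => h.1 rfl⟩

/-- The unit graph of a commutative ring `R`: distinct `x`, `y` are adjacent
iff `x + y` is a unit of `R`. -/
def unitGraph (R : Type*) [CommRing R] : SimpleGraph R where
  Adj x y := x ≠ y ∧ IsUnit (x + y)
  symm := ⟨fun x y ⟨h1, h2⟩ => ⟨h1.symm, by rwa [add_comm]⟩⟩
  loopless := ⟨fun x h => h.1 rfl⟩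

/-- The Sombor index of a finite simple graph:
`SO(G) = ∑_{uv ∈ E(G)} √(deg u ^ 2 + deg v ^ 2)`. -/
noncomputable def somborIndex {V : Type*} [Fintype V] (G : SimpleGraph V) : ℝ :=
  ∑ e ∈ G.edgeFinset,
    Sym2.lift ⟨fun u v => Real.sqrt ((G.degree u : ℝ) ^ 2 + (G.degree v : ℝ) ^ 2),
      fun u v => by dsimp only; rw [add_comm]⟩ e

open Finset

lemma sum_darts_eq_twice_sum_edges {V : Type*} [Fintype V] (G : SimpleGraph V)
    [DecidableRel G.Adj] (f : Sym2 V → ℝ) :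
    ∑ d : G.Dart, f d.edge = 2 * ∑ e ∈ G.edgeFinset, f e := by
  classical
  rw [← Finset.sum_fiberwise_of_maps_to' (g := SimpleGraph.Dart.edge) (t := G.edgeFinset)
    (fun d _ => by simp [SimpleGraph.mem_edgeFinset, d.edge_mem]) f]
  rw [Finset.mul_sum]
  refine Finset.sum_congr rfl fun e he => ?_
  rw [Finset.sum_const, G.dart_edge_fiber_card e (by simpa using he)]
  simp [mul_comm]

lemma sum_darts_eq_double_sum {V : Type*} [Fintype V] (G : SimpleGraph V)
    [DecidableRel G.Adj] (F : V → V → ℝ) :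
    ∑ d : G.Dart, F d.fst d.snd = ∑ v, ∑ w ∈ G.neighborFinset v, F v w := by
  classical
  rw [← Finset.sum_sigma (Finset.univ) (fun v => G.neighborFinset v) (fun p => F p.1 p.2)]
  refine Finset.sum_bij' (fun d _ => ⟨d.fst, d.snd⟩)
    (fun p hp => SimpleGraph.Dart.mk (p.1, p.2)
      (by simpa [SimpleGraph.mem_neighborFinset] using (Finset.mem_sigma.1 hp).2))
    (fun d _ => by simp [Finset.mem_sigma, SimpleGraph.mem_neighborFinset, d.adj])
    (fun p hp => by simp) (fun d _ => rfl) (fun p hp => rfl) (fun d _ => rfl)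

section
variable {R : Type*} [CommRing R] [IsLocalRing R]

lemma nonunit_add {x y : R} (hx : ¬IsUnit x) (hy : ¬IsUnit y) : ¬IsUnit (x + y) := by
  have h := Ideal.add_mem (IsLocalRing.maximalIdeal R)
    ((IsLocalRing.mem_maximalIdeal x).2 hx) ((IsLocalRing.mem_maximalIdeal y).2 hy)
  exact (IsLocalRing.mem_maximalIdeal _).1 h

lemma unit_add_iff {x : R} (hx : ¬IsUnit x) (y : R) : IsUnit (x + y) ↔ IsUnit y := by
  constructor
  · intro h
    by_contra hy
    exact nonunit_add hx hy h
  · intro hy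
    by_contra h
    have : ¬IsUnit (-x) := fun hu => hx (by simpa using hu.neg)
    have h3 := nonunit_add h this
    rw [show x + y + -x = y from by ring] at h3
    exact h3 hy

end

section
variable (R : Type*) [CommRing R] [Fintype R]

lemma units_filter_card : #(Finset.univ.filter fun r : R => IsUnit r) = Fintype.card Rˣ := by
  have : (Finset.univ.filter fun r : R => IsUnit r) =
      Finset.univ.image (fun u : Rˣ => (u : R)) := by
    ext r
    simp [IsUnit, eq_comm]
  rw [this, Finset.card_image_of_injective _ Units.val_injective, Finset.card_univ]

lemma shift_filter_card (x : R) :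
    #(Finset.univ.filter fun y : R => IsUnit (x + y)) = Fintype.card Rˣ := by
  rw [← units_filter_card R]
  apply Finset.card_nbij' (fun y => x + y) (fun r => r - x)
  · intro y hy; simpa using (Finset.mem_filter.1 hy).2
  · intro r hr; simp; simpa using (Finset.mem_filter.1 hr).2
  · intro y _; simp
  · intro r _; simp

end

theorem sombor_unit_graph_local_two_unit (R : Type*) [CommRing R] [Fintype R]
    [IsLocalRing R] (h2 : IsUnit (2 : R)) :
    somborIndex (unitGraph R) =
      (Fintype.card Rˣ : ℝ) * ((Fintype.card R : ℝ) - (Fintype.card Rˣ : ℝ)) *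
          Real.sqrt ((Fintype.card Rˣ : ℝ) ^ 2 + ((Fintype.card Rˣ : ℝ) - 1) ^ 2) +
        (Fintype.card Rˣ : ℝ) *
          ((Fintype.card Rˣ : ℝ) - 1 - ((Fintype.card R : ℝ) - (Fintype.card Rˣ : ℝ))) *
          ((Fintype.card Rˣ : ℝ) - 1) / Real.sqrt 2 := by
  classical
  set G := unitGraph R with hG
  have hadj : ∀ x y : R, G.Adj x y ↔ x ≠ y ∧ IsUnit (x + y) := fun x y => Iff.rfl
  set Uf : Finset R := Finset.univ.filter (fun r => IsUnit r) with hUf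
  set Mf : Finset R := Finset.univ.filter (fun r => ¬IsUnit r) with hMf
  have hucard : Uf.card = Fintype.card Rˣ := units_filter_card R
  have hcardsum : Uf.card + Mf.card = Fintype.card R := by
    rw [hUf, hMf, Finset.card_filter_add_card_filter_not, Finset.card_univ]
  have hu1 : 1 ≤ Fintype.card Rˣ := Fintype.card_pos
  -- neighbor finsets
  have hnbrM : ∀ x : R, ¬IsUnit x → G.neighborFinset x = Uf := by
    intro x hx
    ext y
    rw [SimpleGraph.mem_neighborFinset, hadj, hUf, Finset.mem_filter]
    constructor
    · rintro ⟨-, h⟩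
      exact ⟨Finset.mem_univ _, (unit_add_iff hx y).1 h⟩
    · rintro ⟨-, hy⟩
      exact ⟨fun h => hx (h ▸ hy), (unit_add_iff hx y).2 hy⟩
  have hnbrU : ∀ x : R, IsUnit x →
      G.neighborFinset x = (Finset.univ.filter fun y => IsUnit (x + y)).erase x := by
    intro x hx
    ext y
    rw [SimpleGraph.mem_neighborFinset, hadj, Finset.mem_erase, Finset.mem_filter]
    constructor
    · rintro ⟨h1, h⟩
      exact ⟨h1.symm, Finset.mem_univ _, h⟩
    · rintro ⟨h1, -, h⟩
      exact ⟨h1.symm, h⟩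
  have hdegMnat : ∀ x : R, ¬IsUnit x → G.degree x = Fintype.card Rˣ := by
    intro x hx
    rw [SimpleGraph.degree, hnbrM x hx, hucard]
  have hdegUnat : ∀ x : R, IsUnit x → G.degree x = Fintype.card Rˣ - 1 := by
    intro x hx
    rw [SimpleGraph.degree, hnbrU x hx, Finset.card_erase_of_mem, shift_filter_card]
    rw [Finset.mem_filter]
    refine ⟨Finset.mem_univ _, ?_⟩
    rw [show x + x = 2 * x from by ring]
    exact h2.mul hx
  set u : ℝ := (Fintype.card Rˣ : ℝ) with hu
  set nn : ℝ := (Fintype.card R : ℝ) with hnn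
  have hm : (Mf.card : ℝ) = nn - u := by
    have h' := congrArg (Nat.cast : ℕ → ℝ) hcardsum
    push_cast at h'
    rw [hucard] at h'
    rw [hu, hnn]
    linarith
  have hu0 : (1:ℝ) ≤ u := by
    rw [hu]
    exact_mod_cast hu1
  have hdegMr : ∀ x : R, ¬IsUnit x → (G.degree x : ℝ) = u := by
    intro x hx; rw [hdegMnat x hx]
  have hdegUr : ∀ x : R, IsUnit x → (G.degree x : ℝ) = u - 1 := by
    intro x hx; rw [hdegUnat x hx, Nat.cast_sub hu1, Nat.cast_one]
  have hMsub : ∀ v : R, IsUnit v → Mf ⊆ G.neighborFinset v := by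
    intro v hv w hw
    have hw' : ¬IsUnit w := (Finset.mem_filter.1 hw).2
    rw [SimpleGraph.mem_neighborFinset, hadj]
    refine ⟨fun h => hw' (h ▸ hv), ?_⟩
    rw [add_comm]
    exact (unit_add_iff hw' v).2 hv
  have hNx : ∀ v : R, IsUnit v → ((G.neighborFinset v \ Mf).card : ℝ) = (u - 1) - (nn - u) := by
    intro v hv
    rw [Finset.card_sdiff_of_subset (hMsub v hv), Nat.cast_sub (Finset.card_le_card (hMsub v hv))]
    have hd : ((G.neighborFinset v).card : ℝ) = u - 1 := hdegUr v hv
    rw [hd, hm]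
  set c1 : ℝ := Real.sqrt (u ^ 2 + (u - 1) ^ 2) with hc1
  set c2 : ℝ := Real.sqrt ((u - 1) ^ 2 + (u - 1) ^ 2) with hc2
  -- the doubled sum
  have key : 2 * somborIndex G = ∑ v : R, ∑ w ∈ G.neighborFinset v,
      Real.sqrt ((G.degree v : ℝ) ^ 2 + (G.degree w : ℝ) ^ 2) := by
    rw [somborIndex, ← sum_darts_eq_twice_sum_edges, ← sum_darts_eq_double_sum]
    refine Finset.sum_congr rfl fun d _ => ?_
    rfl
  have hsplit : ∑ v : R, ∑ w ∈ G.neighborFinset v,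
        Real.sqrt ((G.degree v : ℝ) ^ 2 + (G.degree w : ℝ) ^ 2)
      = ∑ v ∈ Uf, (∑ w ∈ G.neighborFinset v,
          Real.sqrt ((G.degree v : ℝ) ^ 2 + (G.degree w : ℝ) ^ 2))
        + ∑ v ∈ Mf, (∑ w ∈ G.neighborFinset v,
          Real.sqrt ((G.degree v : ℝ) ^ 2 + (G.degree w : ℝ) ^ 2)) := by
    rw [hUf, hMf]
    exact (Finset.sum_filter_add_sum_filter_not Finset.univ _ _).symm
  have hinnerM : ∀ v ∈ Mf, (∑ w ∈ G.neighborFinset v,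
      Real.sqrt ((G.degree v : ℝ) ^ 2 + (G.degree w : ℝ) ^ 2)) = u * c1 := by
    intro v hv
    have hv' : ¬IsUnit v := (Finset.mem_filter.1 hv).2
    rw [hnbrM v hv']
    have hcongr : (∑ w ∈ Uf, Real.sqrt ((G.degree v : ℝ) ^ 2 + (G.degree w : ℝ) ^ 2))
        = ∑ _w ∈ Uf, c1 := by
      refine Finset.sum_congr rfl fun w hw => ?_
      rw [hdegMr v hv', hdegUr w (Finset.mem_filter.1 hw).2]
    rw [hcongr, Finset.sum_const, hucard, nsmul_eq_mul]
  have hinnerU : ∀ v ∈ Uf, (∑ w ∈ G.neighborFinset v,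
      Real.sqrt ((G.degree v : ℝ) ^ 2 + (G.degree w : ℝ) ^ 2))
      = ((u - 1) - (nn - u)) * c2 + (nn - u) * c1 := by
    intro v hv
    have hv' : IsUnit v := (Finset.mem_filter.1 hv).2
    rw [← Finset.sum_sdiff (hMsub v hv')]
    have hA : (∑ w ∈ G.neighborFinset v \ Mf,
        Real.sqrt ((G.degree v : ℝ) ^ 2 + (G.degree w : ℝ) ^ 2)) = ((u - 1) - (nn - u)) * c2 := by
      have hcongr : (∑ w ∈ G.neighborFinset v \ Mf,
          Real.sqrt ((G.degree v : ℝ) ^ 2 + (G.degree w : ℝ) ^ 2))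
          = ∑ _w ∈ G.neighborFinset v \ Mf, c2 := by
        refine Finset.sum_congr rfl fun w hw => ?_
        have hwU : IsUnit w := by
          have hmem := (Finset.mem_sdiff.1 hw).2
          rw [hMf, Finset.mem_filter] at hmem
          push_neg at hmem
          exact hmem (Finset.mem_univ _)
        rw [hdegUr v hv', hdegUr w hwU]
      rw [hcongr, Finset.sum_const, nsmul_eq_mul, hNx v hv']
    have hB : (∑ w ∈ Mf,
        Real.sqrt ((G.degree v : ℝ) ^ 2 + (G.degree w : ℝ) ^ 2)) = (nn - u) * c1 := by
      have hcongr : (∑ w ∈ Mf,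
          Real.sqrt ((G.degree v : ℝ) ^ 2 + (G.degree w : ℝ) ^ 2)) = ∑ _w ∈ Mf, c1 := by
        refine Finset.sum_congr rfl fun w hw => ?_
        rw [hdegUr v hv', hdegMr w (Finset.mem_filter.1 hw).2, add_comm]
      rw [hcongr, Finset.sum_const, nsmul_eq_mul, hm]
    rw [hA, hB]
  have htot : 2 * somborIndex G
      = u * (((u - 1) - (nn - u)) * c2 + (nn - u) * c1) + (nn - u) * (u * c1) := by
    rw [key, hsplit, Finset.sum_congr rfl hinnerU, Finset.sum_congr rfl hinnerM,
      Finset.sum_const, Finset.sum_const, nsmul_eq_mul, nsmul_eq_mul, hucard, hm]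
  -- simplify c2
  have hc2' : c2 = Real.sqrt 2 * (u - 1) := by
    rw [hc2, show (u - 1) ^ 2 + (u - 1) ^ 2 = 2 * (u - 1) ^ 2 from by ring,
      Real.sqrt_mul (by norm_num : (0:ℝ) ≤ 2), Real.sqrt_sq (by linarith)]
  have hs2 : Real.sqrt 2 * Real.sqrt 2 = 2 := Real.mul_self_sqrt (by norm_num)
  have hsne : Real.sqrt 2 ≠ 0 := by positivity
  rw [hc2'] at htot
  have goal2 : u * (u - 1 - (nn - u)) * (u - 1) / Real.sqrt 2
      = u * ((u - 1 - (nn - u)) * (Real.sqrt 2 * (u - 1))) / 2 := by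
    rw [div_eq_div_iff hsne (by norm_num : (2:ℝ) ≠ 0)]
    linear_combination (-(u * (u - 1 - (nn - u)) * (u - 1))) * hs2
  rw [goal2]
  linear_combination htot / 2
end

section
/- Let G be a k-regular simple graph on n vertices and let Ḡ be its complement (on the same vertex set). Then the Sombor index of the complete graph K_n on those n vertices satisfies SO(K_n) = (√(SO(G)) + √(SO(Ḡ)))². -/
open scoped Classical

lemma isReg_congr {V : Type*} (G : SimpleGraph V) (r : ℕ) {i1 i2 : G.LocallyFinite}
    (h : @SimpleGraph.IsRegularOfDegree V G i1 r) :
    @SimpleGraph.IsRegularOfDegree V G i2 r := by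
  cases Subsingleton.elim i1 i2; exact h

lemma sombor_regular {V : Type*} [Fintype V] (G : SimpleGraph V) (r : ℕ)
    (h0 : ∃ li : G.LocallyFinite, @SimpleGraph.IsRegularOfDegree V G li r) :
    somborIndex G = ((Fintype.card V : ℝ) * Real.sqrt 2 / 2) * r ^ 2 := by
  have h : G.IsRegularOfDegree r := by
    obtain ⟨li, h0⟩ := h0; exact isReg_congr _ _ h0
  clear h0
  have hcard : 2 * (G.edgeFinset.card : ℝ) = Fintype.card V * r := by
    have := G.sum_degrees_eq_twice_card_edges
    have h2 : ∑ v : V, G.degree v = Fintype.card V * r := by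
      rw [Finset.sum_congr rfl fun v _ => h v, Finset.sum_const, smul_eq_mul, Finset.card_univ]
    rw [h2] at this
    exact_mod_cast this.symm
  have hval : ∀ e ∈ G.edgeFinset,
      Sym2.lift ⟨fun u v => Real.sqrt ((G.degree u : ℝ) ^ 2 + (G.degree v : ℝ) ^ 2),
        fun u v => by dsimp only; rw [add_comm]⟩ e = Real.sqrt 2 * r := by
    intro e _
    induction e using Sym2.ind with
    | _ u v =>
      simp only [Sym2.lift_mk, h u, h v]
      rw [show ((r : ℝ)^2 + (r:ℝ)^2) = 2 * (r:ℝ)^2 by ring, Real.sqrt_mul (by norm_num),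
        Real.sqrt_sq (Nat.cast_nonneg r)]
  rw [somborIndex, Finset.sum_congr rfl hval, Finset.sum_const, nsmul_eq_mul]
  have : (G.edgeFinset.card : ℝ) = Fintype.card V * r / 2 := by linarith
  rw [this]; ring

set_option maxHeartbeats 1000000 in
theorem sombor_complete_regular_complement {V : Type*} [Fintype V]
    (G : SimpleGraph V) (k : ℕ) (hreg : G.IsRegularOfDegree k) :
    somborIndex (⊤ : SimpleGraph V) =
      (Real.sqrt (somborIndex G) + Real.sqrt (somborIndex Gᶜ)) ^ 2 := by
  rcases Nat.eq_zero_or_pos (Fintype.card V) with h0 | hpos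
  · have hV : IsEmpty V := Fintype.card_eq_zero_iff.mp h0
    have : ∀ (H : SimpleGraph V), somborIndex H = 0 := by
      intro H
      rw [somborIndex]
      apply Finset.sum_eq_zero
      intro e he
      exact hV.elim e.out.1
    simp [this]
  · have hk : k ≤ Fintype.card V - 1 := by
      obtain ⟨v⟩ := Fintype.card_pos_iff.mp hpos
      have := G.degree_lt_card_verts v
      rw [hreg v] at this
      omega
    rw [sombor_regular _ _ ⟨_, hreg⟩, sombor_regular _ _ ⟨_, hreg.compl⟩,
      sombor_regular _ _ ⟨_, SimpleGraph.IsRegularOfDegree.top (V := V)⟩]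
    set a : ℝ := (Fintype.card V : ℝ) * Real.sqrt 2 / 2 with ha
    have hanneg : 0 ≤ a := by positivity
    have hsq : ∀ m : ℕ, Real.sqrt (a * m ^ 2) = Real.sqrt a * m := by
      intro m
      rw [Real.sqrt_mul hanneg, Real.sqrt_sq (by positivity)]
    rw [hsq, hsq, ← mul_add, mul_pow, Real.sq_sqrt hanneg]
    have hm : (k : ℝ) + (Fintype.card V - 1 - k : ℕ) = ((Fintype.card V - 1 : ℕ) : ℝ) := by
      have : k + (Fintype.card V - 1 - k) = Fintype.card V - 1 := by omega
      exact_mod_cast congrArg (Nat.cast : ℕ → ℝ) this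
    rw [hm]
end

section
/- Let p < q be odd primes. The total number of edges of the total graph T_Γ(ℤ_{pq}) equals (pq − 1)(p + q − 1)/2. -/
open scoped Classical

theorem total_graph_pq_edge_count (p q : ℕ) [Fact p.Prime] [Fact q.Prime]
    (hp : Odd p) (hq : Odd q) (hpq : p < q) :
    (totalGraph (ZMod (p * q))).edgeFinset.card = (p * q - 1) * (p + q - 1) / 2 := by
  have hp' : p.Prime := Fact.out
  have hq' : q.Prime := Fact.out
  have hp1 : 1 ≤ p := hp'.pos
  have hq1 : 1 ≤ q := hq'.pos
  haveI : NeZero (p * q) := ⟨Nat.mul_ne_zero hp'.pos.ne' hq'.pos.ne'⟩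
  have hodd : Odd (p * q) := hp.mul hq
  -- key arithmetic facts
  have key1 : (p - 1) * (q - 1) + (p + q - 1) = p * q := by
    obtain ⟨a, rfl⟩ : ∃ a, p = a + 1 := ⟨p - 1, by omega⟩
    obtain ⟨b, rfl⟩ : ∃ b, q = b + 1 := ⟨q - 1, by omega⟩
    rw [show (a + 1) * (b + 1) = a * b + a + b + 1 from by ring]
    simp only [Nat.add_sub_cancel]
    rw [show a + 1 + (b + 1) - 1 = a + b + 1 from by omega]
    ring
  have key2 : (p * q - 1) * (p + q - 1)
      = (p - 1) * (q - 1) * (p + q - 1) + (p + q - 1) * (p + q - 1 - 1) := by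
    obtain ⟨a, rfl⟩ : ∃ a, p = a + 1 := ⟨p - 1, by omega⟩
    obtain ⟨b, rfl⟩ : ∃ b, q = b + 1 := ⟨q - 1, by omega⟩
    rw [show (a + 1) * (b + 1) = a * b + a + b + 1 from by ring]
    simp only [Nat.add_sub_cancel]
    rw [show a + 1 + (b + 1) - 1 = a + b + 1 from by omega,
      show a + b + 1 - 1 = a + b from by omega]
    ring
  have h2 : IsUnit (2 : ZMod (p * q)) := by
    have : ((2 : ℕ) : ZMod (p * q)) = 2 := by norm_cast
    rw [← this, ZMod.isUnit_iff_coprime]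
    exact hodd.coprime_two_left
  -- number of units
  have hucard : (Finset.univ.filter (fun x : ZMod (p * q) => IsUnit x)).card
      = (p - 1) * (q - 1) := by
    rw [← Fintype.card_subtype]
    have e : (ZMod (p * q))ˣ ≃ {x : ZMod (p * q) // IsUnit x} :=
      ⟨fun u => ⟨u, u.isUnit⟩, fun x => x.2.unit,
        fun u => Units.ext u.isUnit.unit_spec, fun x => Subtype.ext x.2.unit_spec⟩
    rw [← Fintype.card_congr e, ZMod.card_units_eq_totient,
      Nat.totient_mul ((Nat.coprime_primes hp' hq').mpr hpq.ne),
      Nat.totient_prime hp', Nat.totient_prime hq']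
  -- number of non-units
  have hScard : (Finset.univ.filter (fun x : ZMod (p * q) => ¬ IsUnit x)).card
      = p + q - 1 := by
    have htot := Finset.card_filter_add_card_filter_not
      (s := (Finset.univ : Finset (ZMod (p * q)))) (p := fun x => IsUnit x)
    rw [Finset.card_univ, ZMod.card, hucard] at htot
    exact Nat.add_left_cancel (htot.trans key1.symm)
  -- translated nonunit sets all have card p+q-1
  have hTcard : ∀ x : ZMod (p * q),
      (Finset.univ.filter (fun y : ZMod (p * q) => ¬ IsUnit (x + y))).card = p + q - 1 := by
    intro x
    rw [← hScard]
    apply Finset.card_bij' (fun y _ => x + y) (fun z _ => z - x)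
    · intro y hy; simp only [Finset.mem_filter, Finset.mem_univ, true_and] at hy ⊢; exact hy
    · intro z hz; simp only [Finset.mem_filter, Finset.mem_univ, true_and] at hz ⊢
      rwa [add_sub_cancel]
    · intro y _; exact add_sub_cancel_left x y
    · intro z _; exact add_sub_cancel x z
  -- degree of each vertex
  have hdeg : ∀ x : ZMod (p * q), (totalGraph (ZMod (p * q))).degree x
      = if IsUnit x then p + q - 1 else p + q - 1 - 1 := by
    intro x
    have hnb : (totalGraph (ZMod (p * q))).neighborFinset x
        = (Finset.univ.filter (fun y : ZMod (p * q) => ¬ IsUnit (x + y))).erase x := by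
      ext y
      rw [SimpleGraph.mem_neighborFinset]
      simp only [SimpleGraph.mem_neighborFinset, totalGraph, Finset.mem_erase,
        Finset.mem_filter, Finset.mem_univ, true_and]
      constructor
      · rintro ⟨h1, h2⟩; exact ⟨h1.symm, h2⟩
      · rintro ⟨h1, h2⟩; exact ⟨h1.symm, h2⟩
    have hmemiff : ¬ IsUnit (x + x) ↔ ¬ IsUnit x := by
      rw [← two_mul, (Commute.all _ _).isUnit_mul_iff]
      simp [h2]
    rw [SimpleGraph.degree, hnb]
    by_cases hx : IsUnit x
    · have hxnot : x ∉ Finset.univ.filter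
          (fun y : ZMod (p * q) => ¬ IsUnit (x + y)) := by
        simp only [Finset.mem_filter, Finset.mem_univ, true_and]
        rw [hmemiff]; exact not_not_intro hx
      rw [Finset.erase_eq_of_notMem hxnot, hTcard, if_pos hx]
    · have hxmem : x ∈ Finset.univ.filter
          (fun y : ZMod (p * q) => ¬ IsUnit (x + y)) := by
        simp only [Finset.mem_filter, Finset.mem_univ, true_and]
        exact hmemiff.mpr hx
      rw [Finset.card_erase_of_mem hxmem, hTcard, if_neg hx]
  -- sum of degrees
  have hsum : ∑ x : ZMod (p * q), (totalGraph (ZMod (p * q))).degree x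
      = (p - 1) * (q - 1) * (p + q - 1) + (p + q - 1) * (p + q - 1 - 1) := by
    rw [← Finset.sum_filter_add_sum_filter_not Finset.univ (fun x => IsUnit x)]
    rw [Finset.sum_congr rfl (fun x hx => by
        rw [hdeg x, if_pos (Finset.mem_filter.mp hx).2]),
      Finset.sum_congr (rfl : Finset.univ.filter (fun x : ZMod (p * q) => ¬ IsUnit x) = _)
        (fun x hx => by rw [hdeg x, if_neg (Finset.mem_filter.mp hx).2]),
      Finset.sum_const, Finset.sum_const, hucard, hScard, smul_eq_mul, smul_eq_mul]
  have h2E := SimpleGraph.sum_degrees_eq_twice_card_edges (totalGraph (ZMod (p * q)))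
  rw [hsum] at h2E
  rw [key2, h2E]
  omega
end

section
/- Let p < q be odd primes. The total number of edges of the total graph T_Γ(ℤ_{p²q}) equals p(p + q − 1)(p²q − 1)/2. -/
open scoped Classical

lemma totalGraph_adj {R : Type*} [CommRing R] (x y : R) :
    (totalGraph R).Adj x y ↔ x ≠ y ∧ ¬ IsUnit (x + y) := Iff.rfl

lemma totalGraph_twice_edges (n : ℕ) [NeZero n] (hodd : Odd n) :
    2 * (totalGraph (ZMod n)).edgeFinset.card = (n - n.totient) * (n - 1) := by
  set G := totalGraph (ZMod n) with hG
  set S : Finset (ZMod n) := Finset.univ.filter (fun z => ¬ IsUnit z) with hS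
  set N := S.card with hN
  have h2 : IsUnit (2 : ZMod n) := by
    have := (ZMod.isUnit_iff_coprime 2 n).mpr (Nat.coprime_two_left.mpr hodd)
    simpa using this
  have h2x : ∀ x : ZMod n, IsUnit (x + x) ↔ IsUnit x := by
    intro x
    rw [← two_mul, IsUnit.mul_iff]
    exact ⟨fun h => h.2, fun h => ⟨h2, h⟩⟩
  have hB : ∀ x : ZMod n,
      (Finset.univ.filter (fun y : ZMod n => ¬ IsUnit (x + y))).card = N := by
    intro x
    rw [hN, hS]
    rw [show Finset.univ.filter (fun y : ZMod n => ¬ IsUnit (x + y)) =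
        (Finset.univ.filter (fun z : ZMod n => ¬ IsUnit z)).image (fun z => z - x) by
      ext y
      simp only [Finset.mem_filter, Finset.mem_image, Finset.mem_univ, true_and]
      constructor
      · intro h; exact ⟨x + y, h, by ring⟩
      · rintro ⟨z, hz, rfl⟩
        have : x + (z - x) = z := by ring
        rwa [this]]
    exact Finset.card_image_of_injective _ sub_left_injective
  have hdeg : ∀ x : ZMod n, G.degree x + (if IsUnit x then 0 else 1) = N := by
    intro x
    rw [SimpleGraph.degree, SimpleGraph.neighborFinset_eq_filter]
    have hfil : Finset.univ.filter (fun y => G.Adj x y) =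
        (Finset.univ.filter (fun y : ZMod n => ¬ IsUnit (x + y))).erase x := by
      ext y
      simp only [Finset.mem_filter, Finset.mem_erase, Finset.mem_univ, true_and,
        hG, totalGraph_adj]
      tauto
    rw [hfil]
    by_cases hx : IsUnit x
    · rw [if_pos hx, Finset.erase_eq_of_notMem, add_zero, hB]
      simp only [Finset.mem_filter, Finset.mem_univ, true_and, not_not]
      exact (h2x x).mpr hx
    · have hmem : x ∈ Finset.univ.filter (fun y : ZMod n => ¬ IsUnit (x + y)) := by
        simp only [Finset.mem_filter, Finset.mem_univ, true_and]
        exact fun h => hx ((h2x x).mp h)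
      rw [if_neg hx, Finset.card_erase_of_mem hmem, hB]
      have hN1 : 1 ≤ N := by
        have h := Finset.card_pos.mpr ⟨x, hmem⟩
        rwa [hB x] at h
      omega
  have hcard : Fintype.card (ZMod n) = n := ZMod.card n
  have hsum : 2 * G.edgeFinset.card + N = n * N := by
    have h1 : ∑ x : ZMod n, (G.degree x + (if IsUnit x then 0 else 1)) = n * N := by
      rw [Finset.sum_congr rfl (fun x _ => hdeg x), Finset.sum_const, Finset.card_univ,
        hcard, smul_eq_mul]
    rw [Finset.sum_add_distrib, SimpleGraph.sum_degrees_eq_twice_card_edges] at h1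
    have h2' : ∑ x : ZMod n, (if IsUnit x then 0 else 1) = N := by
      rw [hN, hS, Finset.card_filter]
      exact (Finset.sum_congr rfl (fun x _ => by by_cases h : IsUnit x <;> simp [h])).symm
    omega
  have hunits : (Finset.univ.filter (fun z : ZMod n => IsUnit z)).card = n.totient := by
    rw [show Finset.univ.filter (fun z : ZMod n => IsUnit z) =
        Finset.univ.image (fun u : (ZMod n)ˣ => (u : ZMod n)) by
      ext z
      simp only [Finset.mem_filter, Finset.mem_image, Finset.mem_univ, true_and]
      exact Iff.rfl]
    rw [Finset.card_image_of_injective _ Units.val_injective, Finset.card_univ]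
    exact ZMod.card_units_eq_totient n
  have hNn : N + n.totient = n := by
    rw [hN, hS, ← hunits, add_comm, Finset.card_filter_add_card_filter_not,
      Finset.card_univ, hcard]
  have hmul : N * (n - 1) = N * n - N := by
    rw [Nat.mul_sub, mul_one]
  have hle : N ≤ N * n := Nat.le_mul_of_pos_right _ (Nat.pos_of_ne_zero (NeZero.ne n))
  have hNeq : n - n.totient = N := by omega
  rw [hNeq, hmul]
  have : n * N = N * n := Nat.mul_comm n N
  omega

theorem total_graph_ppq_edge_count (p q : ℕ) [Fact p.Prime] [Fact q.Prime]
    (hp : Odd p) (hq : Odd q) (hpq : p < q) :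
    (totalGraph (ZMod (p ^ 2 * q))).edgeFinset.card =
      p * (p + q - 1) * (p ^ 2 * q - 1) / 2 := by
  have hp2 : 2 ≤ p := (Fact.out : p.Prime).two_le
  have hq2 : 2 ≤ q := (Fact.out : q.Prime).two_le
  have hn0 : 0 < p ^ 2 * q := by positivity
  haveI : NeZero (p ^ 2 * q) := ⟨hn0.ne'⟩
  have hodd : Odd (p ^ 2 * q) := hp.pow.mul hq
  have key := totalGraph_twice_edges (p ^ 2 * q) hodd
  have hphi : (p ^ 2 * q).totient = p * (p - 1) * (q - 1) := by
    rw [Nat.totient_mul, Nat.totient_prime_pow (Fact.out : p.Prime) (by norm_num),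
      Nat.totient_prime (Fact.out : q.Prime)]
    · ring_nf
    · exact Nat.Coprime.pow_left _ ((Nat.coprime_primes Fact.out Fact.out).mpr hpq.ne)
  have hid : p * (p - 1) * (q - 1) + p * (p + q - 1) = p ^ 2 * q := by
    have h1p : 1 ≤ p := by omega
    have h1q : 1 ≤ q := by omega
    zify [h1p, h1q, show 1 ≤ p + q by omega]
    ring
  have hNval : p ^ 2 * q - (p ^ 2 * q).totient = p * (p + q - 1) := by
    rw [hphi]; omega
  rw [hNval] at key
  omega
end
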